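/- arXiv:1101.1934 — 3 statements merged into one kernel-verified Lean document; each statement's English description precedes it below -/
import Mathlib

section
/- For a DMC with minimum transition probability λ > 0, in any variable-length block code the posterior probability of each message at time n satisfies P(M = m | Y^n) ≥ (λ/(1−λ))^n / |M|, for every message m and every output sequence y^n of positive probability. -/
/-!
With `r = λ / (1 - λ)`, every channel letter satisfies `r * W x' y ≤ W x y`: if some row has a
second output `y' ≠ y`, then `W x' y ≤ 1 - W x' y' ≤ 1 - λ` while `W x y ≥ λ`; otherwise the
channel is noiseless, `λ = 1`, and `r = 0`. Multiplying along the output history gives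
`r ^ n * lik m' ≤ lik m` for any two messages, whatever the feedback encoder does, and summing
over `m'` bounds the posterior of `m` from below by `r ^ n / |M|`.
-/

open scoped BigOperators

noncomputable section

/-- Likelihood of an output history (stored in reverse chronological order: head is the most
recent output) given the message `m`, for a variable-length feedback code with encoder
`enc` (mapping the message and the past outputs to the next channel input) over the
channel `W`. -/
def lik {X Y Msg : Type*} (W : X → Y → ℝ) (enc : Msg → List Y → X) (m : Msg) :
    List Y → ℝ
  | [] => 1
  | y :: ys => lik W enc m ys * W (enc m ys) y

section Channel

variable {X Y : Type*} [Fintype Y]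

lemma le_one_sub_of_ne {p : Y → ℝ} {lam : ℝ} (hlam : 0 ≤ lam) (hlow : ∀ y, lam ≤ p y)
    (hsum : ∑ y, p y = 1) {y y' : Y} (hne : y' ≠ y) : p y ≤ 1 - lam := by
  classical
  have hpair : p y + p y' ≤ ∑ z, p z := by
    rw [← Finset.sum_pair hne.symm]
    exact Finset.sum_le_sum_of_subset_of_nonneg (Finset.subset_univ _)
      fun z _ _ => hlam.trans (hlow z)
  linarith [hlow y']

lemma div_one_sub_mul_le (W : X → Y → ℝ) {lam : ℝ} (hlam : 0 ≤ lam)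
    (hlow : ∀ x y, lam ≤ W x y) (hmin : ∃ x y, W x y = lam) (hrow : ∀ x, ∑ y, W x y = 1)
    (x x' : X) (y : Y) : lam / (1 - lam) * W x' y ≤ W x y := by
  by_cases hsingle : ∀ y', y' = y
  · obtain ⟨x₀, y₀, hx₀y₀⟩ := hmin
    have hlam_one : lam = 1 := by
      rw [← hx₀y₀, ← hrow x₀,
        Fintype.sum_eq_single y₀ fun z hz => absurd ((hsingle z).trans (hsingle y₀).symm) hz]
    simpa [hlam_one] using hlam.trans (hlow x y)
  · obtain ⟨y', hne⟩ := not_forall.mp hsingle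
    have hW_le : W x' y ≤ 1 - lam := le_one_sub_of_ne hlam (hlow x') (hrow x') hne
    have hlam_lt : lam < 1 := by linarith [hlow x' y]
    calc lam / (1 - lam) * W x' y ≤ lam / (1 - lam) * (1 - lam) := by gcongr
      _ = lam := div_mul_cancel₀ _ (by linarith)
      _ ≤ W x y := hlow x y

end Channel

section Likelihood

variable {X Y Msg : Type*} (W : X → Y → ℝ) (enc : Msg → List Y → X)

lemma lik_nonneg (hW : ∀ x y, 0 ≤ W x y) (m : Msg) : ∀ ys : List Y, 0 ≤ lik W enc m ys
  | [] => zero_le_one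
  | y :: ys => mul_nonneg (lik_nonneg hW m ys) (hW _ y)

/-- Bounds on single letters that hold for arbitrary pairs of inputs survive feedback encoding. -/
lemma pow_mul_lik_le_lik {r : ℝ} (hr : 0 ≤ r) (hW : ∀ x y, 0 ≤ W x y)
    (hratio : ∀ x x' y, r * W x' y ≤ W x y) (m m' : Msg) :
    ∀ ys : List Y, r ^ ys.length * lik W enc m' ys ≤ lik W enc m ys
  | [] => by simp [lik]
  | y :: ys => by
    calc r ^ (y :: ys).length * lik W enc m' (y :: ys)
        = (r ^ ys.length * lik W enc m' ys) * (r * W (enc m' ys) y) := by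
          simp only [lik, List.length_cons]; ring
      _ ≤ lik W enc m ys * W (enc m ys) y :=
          mul_le_mul (pow_mul_lik_le_lik hr hW hratio m m' ys) (hratio _ _ y)
            (mul_nonneg hr (hW _ y)) (lik_nonneg W enc hW m ys)

lemma pow_div_card_le_posterior [Fintype Msg] {r : ℝ} (hr : 0 ≤ r) (hW : ∀ x y, 0 ≤ W x y)
    (hratio : ∀ x x' y, r * W x' y ≤ W x y) (m : Msg) (ys : List Y)
    (hpos : 0 < ∑ m', lik W enc m' ys) :
    r ^ ys.length / (Fintype.card Msg : ℝ) ≤ lik W enc m ys / ∑ m', lik W enc m' ys := by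
  have hcard : (0 : ℝ) < Fintype.card Msg := by
    have : Nonempty Msg := ⟨m⟩
    exact_mod_cast Fintype.card_pos
  rw [div_le_div_iff₀ hcard hpos]
  calc r ^ ys.length * ∑ m', lik W enc m' ys
      = ∑ m', r ^ ys.length * lik W enc m' ys := Finset.mul_sum _ _ _
    _ ≤ ∑ _m' : Msg, lik W enc m ys :=
        Finset.sum_le_sum fun m' _ => pow_mul_lik_le_lik W enc hr hW hratio m m' ys
    _ = lik W enc m ys * Fintype.card Msg := by
        rw [Finset.sum_const, nsmul_eq_mul, mul_comm, Finset.card_univ]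

end Likelihood

theorem posterior_lower_bound_general {X Y Msg : Type*} [Fintype Y] [Fintype Msg]
    (W : X → Y → ℝ) (lam : ℝ) (hlam : 0 < lam)
    (hlow : ∀ x y, lam ≤ W x y) (hmin : ∃ x y, W x y = lam)
    (hrow : ∀ x, ∑ y, W x y = 1)
    (enc : Msg → List Y → X) :
    ∀ (m : Msg) (ys : List Y), 0 < ∑ m', lik W enc m' ys →
      (lam / (1 - lam)) ^ ys.length / (Fintype.card Msg : ℝ)
        ≤ lik W enc m ys / ∑ m', lik W enc m' ys := by
  intro m ys hpos
  have hW : ∀ x y, 0 ≤ W x y := fun x y => hlam.le.trans (hlow x y)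
  have hlam_le : lam ≤ 1 := by
    obtain ⟨x₀, y₀, hx₀y₀⟩ := hmin
    calc lam = W x₀ y₀ := hx₀y₀.symm
      _ ≤ ∑ y, W x₀ y := Finset.single_le_sum (fun y _ => hW x₀ y) (Finset.mem_univ y₀)
      _ = 1 := hrow x₀
  exact pow_div_card_le_posterior W enc (div_nonneg hlam.le (sub_nonneg.mpr hlam_le)) hW
    (div_one_sub_mul_le W hlam.le hlow hmin hrow) m ys hpos

/-- Posterior lower bound: for a DMC with minimum transition probability `λ > 0` and a
variable-length feedback code with uniformly distributed message, the posterior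
probability of each message after observing any output history of positive probability is
at least `(λ/(1-λ))^n / |M|`. -/
theorem posterior_lower_bound {X Y Msg : Type*} [Fintype X] [Fintype Y] [Fintype Msg]
    (W : X → Y → ℝ) (lam : ℝ) (hlam : 0 < lam)
    (hlow : ∀ x y, lam ≤ W x y) (hmin : ∃ x y, W x y = lam)
    (hrow : ∀ x, ∑ y, W x y = 1)
    (enc : Msg → List Y → X) :
    ∀ (m : Msg) (ys : List Y), 0 < ∑ m', lik W enc m' ys →
      (lam / (1 - lam)) ^ ys.length / (Fintype.card Msg : ℝ)
        ≤ lik W enc m ys / ∑ m', lik W enc m' ys :=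
  posterior_lower_bound_general W lam hlam hlow hmin hrow enc

end
end

section
/- (Jensen step for J) For a variable-length feedback code on a DMC with positive transition probabilities, for any input distribution induced at time n+1 given Y^n and any auxiliary conditional output distribution of the form P'(y_{n+1}|y^n) obtained by reweighting the message prior on a nonempty list, the concavity and definition of J yield J(I(X_{n+1};Y_{n+1}|Y^n)) ≥ E[ ln( P(Y_{n+1}|Y^n) / P'(Y_{n+1}|Y^n) ) | Y^n ], where P' is the output distribution induced by the tilted message distribution. -/
open scoped BigOperators

noncomputable section

/-- A probability distribution on a finite set, given as a nonnegative function summing to one. -/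
def IsDist {X : Type*} [Fintype X] (p : X → ℝ) : Prop :=
  (∀ x, 0 ≤ p x) ∧ ∑ x, p x = 1

/-- Kullback–Leibler divergence between two distributions on a finite set. -/
def klDiv {Y : Type*} [Fintype Y] (p q : Y → ℝ) : ℝ :=
  ∑ y, p y * Real.log (p y / q y)

/-- Output distribution induced by input distribution `P` over the channel `W`. -/
def outDist {X Y : Type*} [Fintype X] (W : X → Y → ℝ) (P : X → ℝ) (y : Y) : ℝ :=
  ∑ x, P x * W x y

/-- Mutual information `I(P, W)` of input distribution `P` over channel `W`. -/
def mutInfo {X Y : Type*} [Fintype X] [Fintype Y] (W : X → Y → ℝ) (P : X → ℝ) : ℝ :=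
  ∑ x, P x * klDiv (W x) (outDist W P)

/-- Channel capacity `C = max_P I(P, W)`. -/
def capacity {X Y : Type*} [Fintype X] [Fintype Y] (W : X → Y → ℝ) : ℝ :=
  sSup { c | ∃ P : X → ℝ, IsDist P ∧ c = mutInfo W P }

/-- The two-phase exponent function `J(R)`: the supremum over time-sharing constants
`λ ∈ [0,1]`, input letters `x₁, x₂` and input distributions `P₁, P₂` with
`λ I(P₁,W) + (1-λ) I(P₂,W) ≥ R` of `λ D(Q₁‖W_{x₁}) + (1-λ) D(Q₂‖W_{x₂})`. -/
def Jfun {X Y : Type*} [Fintype X] [Fintype Y] (W : X → Y → ℝ) (R : ℝ) : ℝ :=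
  sSup { v | ∃ (lam : ℝ) (x₁ x₂ : X) (P₁ P₂ : X → ℝ),
      0 ≤ lam ∧ lam ≤ 1 ∧ IsDist P₁ ∧ IsDist P₂ ∧
      R ≤ lam * mutInfo W P₁ + (1 - lam) * mutInfo W P₂ ∧
      v = lam * klDiv (outDist W P₁) (W x₁) + (1 - lam) * klDiv (outDist W P₂) (W x₂) }

/-!
Both output distributions are induced by input distributions: `q` by the law `pX` of the
encoded letter, `q'` by the law of the letter under the tilted prior. Convexity of `D(q ‖ ·)`
(Jensen's inequality for `log`) bounds `D(q ‖ q')` by an average of `D(q ‖ W_x)`, hence by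
one of them, and `D(Q ‖ W_x)` with `Q` induced by `pX` is the value of `J(I(pX, W))`'s
objective at time-sharing constant `1`. Positivity of `W` bounds every such divergence, so
the supremum defining `J` is a genuine one and not `sSup`'s junk value. -/

def pushforward {M X : Type*} [Fintype M] [DecidableEq X] (f : M → X) (w : M → ℝ) (x : X) : ℝ :=
  ∑ m ∈ Finset.univ.filter (fun m => f m = x), w m

def condOn {M : Type*} [DecidableEq M] (w : M → ℝ) (L : Finset M) (m : M) : ℝ :=
  if m ∈ L then w m / ∑ m' ∈ L, w m' else 0

section Distributions

variable {M X Y : Type*} [Fintype M] [Fintype X]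

theorem sum_pushforward [DecidableEq X] (f : M → X) (w : M → ℝ) :
    ∑ x, pushforward f w x = ∑ m, w m :=
  Finset.sum_fiberwise_of_maps_to (fun m _ => Finset.mem_univ (f m)) w

theorem IsDist.pushforward [DecidableEq X] {w : M → ℝ} (hw : IsDist w) (f : M → X) :
    IsDist (pushforward f w) :=
  ⟨fun _ => Finset.sum_nonneg fun m _ => hw.1 m, (sum_pushforward f w).trans hw.2⟩

theorem outDist_pushforward [DecidableEq X] (W : X → Y → ℝ) (f : M → X) (w : M → ℝ) (y : Y) :
    outDist W (pushforward f w) y = ∑ m, w m * W (f m) y := by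
  simp_rw [outDist, pushforward, Finset.sum_mul]
  rw [← Finset.sum_fiberwise_of_maps_to (fun m _ => Finset.mem_univ (f m))
    (fun m => w m * W (f m) y)]
  refine Finset.sum_congr rfl fun x _ => Finset.sum_congr rfl fun m hm => ?_
  rw [(Finset.mem_filter.mp hm).2]

theorem isDist_condOn [DecidableEq M] {w : M → ℝ} (hw : ∀ m, 0 ≤ w m) {L : Finset M}
    (hL : 0 < ∑ m ∈ L, w m) : IsDist (condOn w L) := by
  refine ⟨fun m => ?_, ?_⟩
  · simp only [condOn]
    split_ifs
    exacts [div_nonneg (hw m) hL.le, le_rfl]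
  · simp only [condOn]
    rw [Finset.sum_ite_mem, Finset.univ_inter, ← Finset.sum_div, div_self hL.ne']

theorem IsDist.exists_pos {P : X → ℝ} (hP : IsDist P) : ∃ x, 0 < P x := by
  obtain ⟨x, -, hx⟩ := Finset.exists_lt_of_sum_lt (s := Finset.univ) (f := 0) (g := P)
    (by simp [hP.2])
  exact ⟨x, hx⟩

theorem IsDist.exists_sum_mul_le {P : X → ℝ} (hP : IsDist P) (g : X → ℝ) :
    ∃ x, ∑ x', P x' * g x' ≤ g x := by
  obtain ⟨x₀, -⟩ := hP.exists_pos
  obtain ⟨x, -, hx⟩ := Finset.exists_max_image Finset.univ g ⟨x₀, Finset.mem_univ x₀⟩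
  refine ⟨x, ?_⟩
  calc ∑ x', P x' * g x' ≤ ∑ x', P x' * g x :=
        Finset.sum_le_sum fun x' _ => mul_le_mul_of_nonneg_left (hx x' (Finset.mem_univ _)) (hP.1 x')
    _ = g x := by rw [← Finset.sum_mul, hP.2, one_mul]

end Distributions

section Channel

variable {X Y : Type*} [Fintype X] {W : X → Y → ℝ}

theorem outDist_nonneg (hW : ∀ x y, 0 ≤ W x y) {P : X → ℝ} (hP : ∀ x, 0 ≤ P x) (y : Y) :
    0 ≤ outDist W P y :=
  Finset.sum_nonneg fun x _ => mul_nonneg (hP x) (hW x y)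

theorem outDist_pos (hW : ∀ x y, 0 < W x y) {P : X → ℝ} (hP : IsDist P) (y : Y) :
    0 < outDist W P y := by
  obtain ⟨x, hx⟩ := hP.exists_pos
  exact Finset.sum_pos' (fun x _ => mul_nonneg (hP.1 x) (hW x y).le)
    ⟨x, Finset.mem_univ x, mul_pos hx (hW x y)⟩

theorem outDist_le_sum (hW : ∀ x y, 0 ≤ W x y) {P : X → ℝ} (hP : IsDist P) (y : Y) :
    outDist W P y ≤ ∑ x, W x y :=
  Finset.sum_le_sum fun x _ => mul_le_of_le_one_left (hW x y) <|
    hP.2 ▸ Finset.single_le_sum (fun x _ => hP.1 x) (Finset.mem_univ x)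

theorem sum_mul_log_le_log_outDist (hW : ∀ x y, 0 < W x y) {P : X → ℝ} (hP : IsDist P) (y : Y) :
    ∑ x, P x * Real.log (W x y) ≤ Real.log (outDist W P y) := by
  simpa only [smul_eq_mul, outDist] using strictConcaveOn_log_Ioi.concaveOn.le_map_sum
    (fun x _ => hP.1 x) hP.2 (fun x _ => hW x y) (t := Finset.univ)

theorem klDiv_outDist_le [Fintype Y] (hW : ∀ x y, 0 < W x y) {P : X → ℝ} (hP : IsDist P)
    {q : Y → ℝ} (hq : ∀ y, 0 ≤ q y) : klDiv q (outDist W P) ≤ ∑ x, P x * klDiv q (W x) := by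
  simp_rw [klDiv, Finset.mul_sum]
  rw [Finset.sum_comm]
  refine Finset.sum_le_sum fun y _ => ?_
  rcases (hq y).eq_or_lt with h | h
  · simp [← h]
  have hQ := outDist_pos hW hP y
  calc q y * Real.log (q y / outDist W P y)
      = q y * (Real.log (q y) - Real.log (outDist W P y)) := by rw [Real.log_div h.ne' hQ.ne']
    _ ≤ q y * (Real.log (q y) - ∑ x, P x * Real.log (W x y)) := by
      gcongr; exact sum_mul_log_le_log_outDist hW hP y
    _ = ∑ x, P x * (q y * Real.log (q y / W x y)) := by
      have hterm : ∀ x, P x * (q y * Real.log (q y / W x y))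
          = q y * Real.log (q y) * P x - q y * (P x * Real.log (W x y)) := fun x => by
        rw [Real.log_div h.ne' (hW x y).ne']; ring
      simp_rw [hterm, Finset.sum_sub_distrib, ← Finset.mul_sum, hP.2]
      ring

theorem mul_log_div_le {t c w : ℝ} (ht : 0 ≤ t) (htc : t ≤ c) (hw : 0 < w) :
    t * Real.log (t / w) ≤ c * |Real.log (c / w)| := by
  rcases ht.eq_or_lt with rfl | ht
  · simp only [zero_mul]; positivity
  calc t * Real.log (t / w) ≤ t * |Real.log (c / w)| := by
        gcongr
        exact (Real.log_le_log (by positivity) (by gcongr)).trans (le_abs_self _)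
    _ ≤ c * |Real.log (c / w)| := by gcongr

theorem exists_klDiv_outDist_le [Fintype Y] (hW : ∀ x y, 0 < W x y) :
    ∃ B, ∀ P, IsDist P → ∀ x, klDiv (outDist W P) (W x) ≤ B := by
  obtain ⟨B, hB⟩ := (Set.finite_range fun x => ∑ y, (∑ x', W x' y) *
    |Real.log ((∑ x', W x' y) / W x y)|).bddAbove
  refine ⟨B, fun P hP x => le_trans ?_ (hB ⟨x, rfl⟩)⟩
  exact Finset.sum_le_sum fun y _ =>
    mul_log_div_le (outDist_nonneg (fun x y => (hW x y).le) hP.1 y)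
      (outDist_le_sum (fun x y => (hW x y).le) hP y) (hW x y)

theorem klDiv_outDist_le_Jfun [Fintype Y] (hW : ∀ x y, 0 < W x y) {P : X → ℝ} (hP : IsDist P)
    (x : X) : klDiv (outDist W P) (W x) ≤ Jfun W (mutInfo W P) := by
  obtain ⟨B, hB⟩ := exists_klDiv_outDist_le hW
  refine le_csSup ⟨B, ?_⟩ ⟨1, x, x, P, P, zero_le_one, le_rfl, hP, hP, by simp, by simp⟩
  rintro v ⟨lam, x₁, x₂, P₁, P₂, h0, h1, hP₁, hP₂, -, rfl⟩
  nlinarith [hB P₁ hP₁ x₁, hB P₂ hP₂ x₂]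

end Channel

theorem jensen_step_for_J_general {X Y Msg : Type*} [Fintype X] [Fintype Y] [Fintype Msg]
    [DecidableEq X] [DecidableEq Msg]
    (W : X → Y → ℝ) (hpos : ∀ x y, 0 < W x y)
    (p : Msg → ℝ) (hp : (∀ m, 0 ≤ p m) ∧ ∑ m, p m = 1)
    (L : Finset Msg) (hL : 0 < ∑ m ∈ L, p m)
    (enc : Msg → X) :
    let p' : Msg → ℝ := fun m => if m ∈ L then p m / ∑ m' ∈ L, p m' else 0
    let q : Y → ℝ := fun y => ∑ m, p m * W (enc m) y
    let q' : Y → ℝ := fun y => ∑ m, p' m * W (enc m) y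
    let pX : X → ℝ := fun x => ∑ m ∈ Finset.univ.filter (fun m => enc m = x), p m
    klDiv q q' ≤ Jfun W (mutInfo W pX) := by
  intro p' q q' pX
  have hpX : IsDist pX := IsDist.pushforward hp enc
  have hpX' : IsDist (pushforward enc p') := (isDist_condOn hp.1 hL).pushforward enc
  have hq : q = outDist W pX := funext fun y => (outDist_pushforward W enc p y).symm
  have hq' : q' = outDist W (pushforward enc p') :=
    funext fun y => (outDist_pushforward W enc p' y).symm
  obtain ⟨x, hx⟩ := hpX'.exists_sum_mul_le fun x => klDiv q (W x)
  calc klDiv q q' ≤ ∑ x, pushforward enc p' x * klDiv q (W x) := by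
        rw [hq']; exact klDiv_outDist_le hpos hpX' (hq ▸ outDist_nonneg (fun x y => (hpos x y).le) hpX.1)
    _ ≤ klDiv q (W x) := hx
    _ ≤ Jfun W (mutInfo W pX) := hq ▸ klDiv_outDist_le_Jfun hpos hpX x

/-- Jensen step for `J`: for the input distribution induced at one step of a variable-length
feedback code (prior `p` on messages, deterministic encoder `enc`), and the auxiliary
output distribution `q'` induced by reweighting the message prior on a list `L` of
positive prior probability, concavity of `J`, convexity of the KL divergence and Jensen's
inequality yield `J(I(X_{n+1}; Y_{n+1}|Y^n)) ≥ E[ln(P(Y_{n+1}|Y^n)/P'(Y_{n+1}|Y^n))|Y^n]`,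
i.e. `D(q ‖ q') ≤ J(I(pX, W))`. -/
theorem jensen_step_for_J {X Y Msg : Type*} [Fintype X] [Fintype Y] [Fintype Msg]
    [Nonempty X] [DecidableEq X] [DecidableEq Msg]
    (W : X → Y → ℝ) (hpos : ∀ x y, 0 < W x y) (hrow : ∀ x, ∑ y, W x y = 1)
    (p : Msg → ℝ) (hp : (∀ m, 0 ≤ p m) ∧ ∑ m, p m = 1)
    (L : Finset Msg) (hL : 0 < ∑ m ∈ L, p m)
    (enc : Msg → X) :
    let p' : Msg → ℝ := fun m => if m ∈ L then p m / ∑ m' ∈ L, p m' else 0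
    let q : Y → ℝ := fun y => ∑ m, p m * W (enc m) y
    let q' : Y → ℝ := fun y => ∑ m, p' m * W (enc m) y
    let pX : X → ℝ := fun x => ∑ m ∈ Finset.univ.filter (fun m => enc m = x), p m
    klDiv q q' ≤ Jfun W (mutInfo W pX) :=
  jensen_step_for_J_general W hpos p hp L hL enc

end
end

section
/- (Convexity of the achievable bit-wise UEP region) Fix ℓ ≥ 1. Call a pair of vectors (R⃗, E⃗) ∈ ℝ_{≥0}^{ℓ} × ℝ_{≥0}^{ℓ} admissible if there exists β⃗ ∈ ℝ_{≥0}^{ℓ} with Σ_j β_j ≤ 1 such that R_i ≤ C·β_i for all i, and E_i ≤ (1 − Σ_{j=1}^{ℓ} β_j)·D + Σ_{j=i+1}^{ℓ} β_j·J(R_j/β_j) for all i (with the convention β_j·J(R_j/β_j) = 0 if R_j = β_j = 0). Then the set of admissible pairs (R⃗, E⃗) is convex. -/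
/-!
The exponent bound is affine in `β⃗` plus a sum of perspectives `(β, R) ↦ β J(R / β)`. The
perspective of a concave function is superadditive and positively homogeneous, hence concave, on
the cone `β ≥ 0, R ≥ 0, β = 0 → R = 0`, and `0 ≤ R ≤ C β` keeps each `(β_j, R_j)` in that cone.
So mixing the time-sharing vectors of two admissible pairs witnesses that their mixture is
admissible.
-/

open Set

noncomputable def perspective (J : ℝ → ℝ) (β R : ℝ) : ℝ :=
  if β = 0 then 0 else β * J (R / β)

section Perspective

variable {J : ℝ → ℝ}

@[simp]
lemma perspective_zero_left (J : ℝ → ℝ) (R : ℝ) : perspective J 0 R = 0 := if_pos rfl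

lemma perspective_of_ne_zero {β : ℝ} (hβ : β ≠ 0) (R : ℝ) :
    perspective J β R = β * J (R / β) := if_neg hβ

lemma perspective_mul_mul (J : ℝ → ℝ) (t β R : ℝ) :
    perspective J (t * β) (t * R) = t * perspective J β R := by
  rcases eq_or_ne t 0 with rfl | ht
  · simp
  rcases eq_or_ne β 0 with rfl | hβ
  · simp
  rw [perspective_of_ne_zero (mul_ne_zero ht hβ), perspective_of_ne_zero hβ,
    mul_div_mul_left _ _ ht, mul_assoc]

lemma perspective_add_le_of_pos (hJ : ConcaveOn ℝ (Ici 0) J) {β₁ β₂ R₁ R₂ : ℝ}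
    (hβ₁ : 0 < β₁) (hβ₂ : 0 < β₂) (hR₁ : 0 ≤ R₁) (hR₂ : 0 ≤ R₂) :
    perspective J β₁ R₁ + perspective J β₂ R₂ ≤ perspective J (β₁ + β₂) (R₁ + R₂) := by
  have hs : 0 < β₁ + β₂ := add_pos hβ₁ hβ₂
  rw [perspective_of_ne_zero hβ₁.ne', perspective_of_ne_zero hβ₂.ne',
    perspective_of_ne_zero hs.ne']
  have h := hJ.2 (mem_Ici.2 (div_nonneg hR₁ hβ₁.le)) (mem_Ici.2 (div_nonneg hR₂ hβ₂.le))
    (div_nonneg hβ₁.le hs.le) (div_nonneg hβ₂.le hs.le) (by field_simp)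
  have hpt : β₁ / (β₁ + β₂) * (R₁ / β₁) + β₂ / (β₁ + β₂) * (R₂ / β₂)
      = (R₁ + R₂) / (β₁ + β₂) := by
    field_simp
  rw [smul_eq_mul, smul_eq_mul, smul_eq_mul, smul_eq_mul, hpt] at h
  calc β₁ * J (R₁ / β₁) + β₂ * J (R₂ / β₂)
      = (β₁ + β₂) * (β₁ / (β₁ + β₂) * J (R₁ / β₁) + β₂ / (β₁ + β₂) * J (R₂ / β₂)) := by
        field_simp
    _ ≤ (β₁ + β₂) * J ((R₁ + R₂) / (β₁ + β₂)) := mul_le_mul_of_nonneg_left h hs.le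

def perspectiveCone : Set (ℝ × ℝ) := {p | 0 ≤ p.1 ∧ 0 ≤ p.2 ∧ (p.1 = 0 → p.2 = 0)}

lemma perspective_add_le (hJ : ConcaveOn ℝ (Ici 0) J) {p q : ℝ × ℝ}
    (hp : p ∈ perspectiveCone) (hq : q ∈ perspectiveCone) :
    perspective J p.1 p.2 + perspective J q.1 q.2 ≤ perspective J (p.1 + q.1) (p.2 + q.2) := by
  obtain ⟨hp₁, hp₂, hp₀⟩ := hp
  obtain ⟨hq₁, hq₂, hq₀⟩ := hq
  rcases hp₁.eq_or_lt with hp₁ | hp₁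
  · simp [← hp₁, hp₀ hp₁.symm]
  rcases hq₁.eq_or_lt with hq₁ | hq₁
  · simp [← hq₁, hq₀ hq₁.symm]
  exact perspective_add_le_of_pos hJ hp₁ hq₁ hp₂ hq₂

lemma mem_perspectiveCone_of_le_mul {β R C : ℝ} (hβ : 0 ≤ β) (hR : 0 ≤ R) (h : R ≤ C * β) :
    (β, R) ∈ perspectiveCone :=
  ⟨hβ, hR, fun hβ₀ : β = 0 => le_antisymm (h.trans_eq (by rw [hβ₀, mul_zero])) hR⟩

lemma perspectiveCone_smul_mem {p : ℝ × ℝ} (hp : p ∈ perspectiveCone) {t : ℝ} (ht : 0 ≤ t) :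
    t • p ∈ perspectiveCone := by
  obtain ⟨hp₁, hp₂, hp₀⟩ := hp
  refine ⟨mul_nonneg ht hp₁, mul_nonneg ht hp₂, fun h => ?_⟩
  rcases mul_eq_zero.1 h with h | h
  · simp [h]
  · simp [hp₀ h]

lemma perspectiveCone_add_mem {p q : ℝ × ℝ} (hp : p ∈ perspectiveCone)
    (hq : q ∈ perspectiveCone) : p + q ∈ perspectiveCone := by
  obtain ⟨hp₁, hp₂, hp₀⟩ := hp
  obtain ⟨hq₁, hq₂, hq₀⟩ := hq
  refine ⟨add_nonneg hp₁ hq₁, add_nonneg hp₂ hq₂, fun h => ?_⟩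
  rw [Prod.fst_add, add_eq_zero_iff_of_nonneg hp₁ hq₁] at h
  rw [Prod.snd_add, hp₀ h.1, hq₀ h.2, add_zero]

lemma convex_perspectiveCone : Convex ℝ perspectiveCone :=
  fun _ hp _ hq _ _ ha hb _ =>
    perspectiveCone_add_mem (perspectiveCone_smul_mem hp ha) (perspectiveCone_smul_mem hq hb)

theorem concaveOn_perspective (hJ : ConcaveOn ℝ (Ici 0) J) :
    ConcaveOn ℝ perspectiveCone (fun p : ℝ × ℝ => perspective J p.1 p.2) := by
  refine ⟨convex_perspectiveCone, fun p hp q hq a b ha hb _ => ?_⟩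
  have h := perspective_add_le hJ (perspectiveCone_smul_mem hp ha)
    (perspectiveCone_smul_mem hq hb)
  simpa only [Prod.smul_fst, Prod.smul_snd, smul_eq_mul, perspective_mul_mul,
    Prod.fst_add, Prod.snd_add] using h

lemma sum_perspective_combo_le {ι : Type*} (hJ : ConcaveOn ℝ (Ici 0) J) (s : Finset ι)
    {β β' R R' : ι → ℝ} (h : ∀ j ∈ s, (β j, R j) ∈ perspectiveCone)
    (h' : ∀ j ∈ s, (β' j, R' j) ∈ perspectiveCone) {a b : ℝ} (ha : 0 ≤ a) (hb : 0 ≤ b)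
    (hab : a + b = 1) :
    a * ∑ j ∈ s, perspective J (β j) (R j) + b * ∑ j ∈ s, perspective J (β' j) (R' j) ≤
      ∑ j ∈ s, perspective J (a * β j + b * β' j) (a * R j + b * R' j) := by
  rw [Finset.mul_sum, Finset.mul_sum, ← Finset.sum_add_distrib]
  exact Finset.sum_le_sum fun j hj => by
    simpa using (concaveOn_perspective hJ).2 (h j hj) (h' j hj) ha hb hab

end Perspective

theorem admissible_region_convex_general (ℓ : ℕ) (C D : ℝ)
    (J : ℝ → ℝ)
    (hJconc : ConcaveOn ℝ (Set.Ici 0) J) :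
    Convex ℝ {p : (Fin ℓ → ℝ) × (Fin ℓ → ℝ) |
      (∀ i, 0 ≤ p.1 i) ∧ (∀ i, 0 ≤ p.2 i) ∧
      ∃ β : Fin ℓ → ℝ, (∀ i, 0 ≤ β i) ∧ (∑ j, β j) ≤ 1 ∧
        (∀ i, p.1 i ≤ C * β i) ∧
        (∀ i, p.2 i ≤ (1 - ∑ j, β j) * D +
          ∑ j ∈ Finset.univ.filter (fun j : Fin ℓ => (i : ℕ) < (j : ℕ)),
            (if β j = 0 then 0 else β j * J (p.1 j / β j)))} := by
  rintro ⟨R, E⟩ ⟨hR, hE, β, hβ, hβsum, hRβ, hEβ⟩ ⟨R', E'⟩ ⟨hR', hE', β', hβ', hβ'sum, hR'β', hE'β'⟩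
    a b ha hb hab
  have hsum : ∑ j, (a * β j + b * β' j) = a * ∑ j, β j + b * ∑ j, β' j := by
    rw [Finset.sum_add_distrib, Finset.mul_sum, Finset.mul_sum]
  refine ⟨fun i => ?_, fun i => ?_, a • β + b • β', fun i => ?_, ?_, fun i => ?_, fun i => ?_⟩
  all_goals simp only [Prod.fst_add, Prod.snd_add, Prod.smul_fst, Prod.smul_snd, Pi.add_apply,
    Pi.smul_apply, smul_eq_mul]
  · exact add_nonneg (mul_nonneg ha (hR i)) (mul_nonneg hb (hR' i))
  · exact add_nonneg (mul_nonneg ha (hE i)) (mul_nonneg hb (hE' i))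
  · exact add_nonneg (mul_nonneg ha (hβ i)) (mul_nonneg hb (hβ' i))
  · rw [hsum]
    linear_combination mul_le_mul_of_nonneg_left hβsum ha +
      mul_le_mul_of_nonneg_left hβ'sum hb + hab
  · linear_combination mul_le_mul_of_nonneg_left (hRβ i) ha +
      mul_le_mul_of_nonneg_left (hR'β' i) hb
  · change _ ≤ _ * D + ∑ j ∈ _, perspective J _ _
    calc a * E i + b * E' i
        ≤ a * ((1 - ∑ j, β j) * D + ∑ j ∈ _, perspective J (β j) (R j)) +
          b * ((1 - ∑ j, β' j) * D + ∑ j ∈ _, perspective J (β' j) (R' j)) :=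
          add_le_add (mul_le_mul_of_nonneg_left (hEβ i) ha) (mul_le_mul_of_nonneg_left (hE'β' i) hb)
      _ = (1 - ∑ j, (a * β j + b * β' j)) * D + (a * ∑ j ∈ _, perspective J (β j) (R j) +
            b * ∑ j ∈ _, perspective J (β' j) (R' j)) := by
          rw [hsum]
          linear_combination D * hab
      _ ≤ _ := (add_le_add_iff_left _).2 <| sum_perspective_combo_le hJconc _
          (fun j _ => mem_perspectiveCone_of_le_mul (hβ j) (hR j) (hRβ j))
          (fun j _ => mem_perspectiveCone_of_le_mul (hβ' j) (hR' j) (hR'β' j)) ha hb hab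

/-- Convexity of the achievable bit-wise UEP region: for fixed `ℓ`, a rate-vector /
exponent-vector pair `(R⃗, E⃗)` of nonnegative vectors is admissible if there exists a
time-sharing vector `β⃗ ≥ 0` with `Σ_j β_j ≤ 1`, `R_i ≤ C β_i` for all `i`, and
`E_i ≤ (1 − Σ_j β_j) D + Σ_{j>i} β_j J(R_j/β_j)` for all `i` (with the convention
`β_j J(R_j/β_j) = 0` when `β_j = 0`). The set of admissible pairs is convex. -/
theorem admissible_region_convex (ℓ : ℕ) (C D : ℝ) (hC : 0 < C) (hD : 0 < D)
    (J : ℝ → ℝ)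
    (hJconc : ConcaveOn ℝ (Set.Ici 0) J)
    (hJanti : Antitone J)
    (hJle : ∀ R, J R ≤ D) :
    Convex ℝ {p : (Fin ℓ → ℝ) × (Fin ℓ → ℝ) |
      (∀ i, 0 ≤ p.1 i) ∧ (∀ i, 0 ≤ p.2 i) ∧
      ∃ β : Fin ℓ → ℝ, (∀ i, 0 ≤ β i) ∧ (∑ j, β j) ≤ 1 ∧
        (∀ i, p.1 i ≤ C * β i) ∧
        (∀ i, p.2 i ≤ (1 - ∑ j, β j) * D +
          ∑ j ∈ Finset.univ.filter (fun j : Fin ℓ => (i : ℕ) < (j : ℕ)),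
            (if β j = 0 then 0 else β j * J (p.1 j / β j)))} :=
  admissible_region_convex_general ℓ C D J hJconc
end
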